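/- Let R satisfy (H1), a ∈ ℝ₊ᵈ, and fix n ≥ 1. For the solution of SP({a+Σu_n}, R): z_n^{(a)} = 0 if and only if −R⁻¹u_n ≥ R⁻¹z_{n−1}^{(a)}, if and only if −R⁻¹a + Σ_{ℓ=1}^n(−R⁻¹u_ℓ) ≥ y_{n−1}^{(a)}. Moreover, in that case y_n^{(a)} = −R⁻¹a + Σ_{ℓ=1}^n(−R⁻¹u_ℓ). -/

import Mathlib

open Matrix Finset MeasureTheory ProbabilityTheory

noncomputable section

/-- A pair `(ξ, ζ)` solves the linear complementarity problem `LCP(η, M)`. -/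
def IsLCPSol {d : ℕ} (M : Matrix (Fin d) (Fin d) ℝ) (η ξ ζ : Fin d → ℝ) : Prop :=
  ζ = η + M *ᵥ ξ ∧ (∀ i, 0 ≤ ξ i) ∧ (∀ i, 0 ≤ ζ i) ∧ ξ ⬝ᵥ ζ = 0

/-- `(y, z)` solves the Skorokhod problem `SP({a + Σ u_n}, M)` in the orthant. -/
def IsSPSol {d : ℕ} (M : Matrix (Fin d) (Fin d) ℝ) (a : Fin d → ℝ)
    (u y z : ℕ → Fin d → ℝ) : Prop :=
  y 0 = 0 ∧ z 0 = a ∧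
  ∀ n, 1 ≤ n →
    z n = z (n - 1) + u n + M *ᵥ (y n - y (n - 1)) ∧
    (∀ i, 0 ≤ z n i) ∧ (∀ i, 0 ≤ y n i - y (n - 1) i) ∧
    z n ⬝ᵥ (y n - y (n - 1)) = 0

/-!
Write `R = 1 - Pᵀ`. Since `P ≥ 0` and no real `t ≥ 1` lies in the spectrum of `P`, the resolvent
`(t • 1 - Pᵀ)⁻¹` is continuous on `[1, ∞)` and nonnegative for large `t`; stepping down from there
shows `R⁻¹ ≥ 0` entrywise, so `R⁻¹ = 1 + R⁻¹ Pᵀ` dominates the identity on the nonnegative orthant.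
Each step of the Skorokhod problem is the complementarity problem `z_n = η + R ξ` with
`η = z_{n-1} + u_n`, `ξ = y_n - y_{n-1}`; applying `R⁻¹` gives `R⁻¹ z_n = R⁻¹ η + ξ`, and
complementarity forces `z_n = 0` exactly when `R⁻¹ η ≤ 0`. Summing the steps gives
`z_n = a + Σ u_ℓ + R y_n`, which rewrites this condition in terms of `y_{n-1}` and yields `y_n`
once `z_n = 0`.
-/

open Filter Topology

namespace Matrix

variable {ι : Type*} [Fintype ι]

lemma mulVec_nonneg_of_entries_nonneg {A : Matrix ι ι ℝ} (hA : ∀ i j, 0 ≤ A i j)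
    {v : ι → ℝ} (hv : 0 ≤ v) : 0 ≤ A *ᵥ v :=
  fun i => Finset.sum_nonneg fun j _ => mul_nonneg (hA i j) (hv j)

lemma mul_entries_nonneg {A B : Matrix ι ι ℝ} (hA : ∀ i j, 0 ≤ A i j) (hB : ∀ i j, 0 ≤ B i j)
    (i j : ι) : 0 ≤ (A * B) i j :=
  Finset.sum_nonneg fun k _ => mul_nonneg (hA i k) (hB k j)

variable [DecidableEq ι]

section RowSum

variable {Q : Matrix ι ι ℝ} {t : ℝ}

/-- Maximum principle: look at the most negative coordinate of `x`. -/
lemma nonneg_of_smul_one_sub_mulVec_nonneg (hQ : ∀ i j, 0 ≤ Q i j)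
    (hrow : ∀ i, ∑ j, Q i j < t) {x : ι → ℝ} (hx : 0 ≤ (t • 1 - Q) *ᵥ x) : 0 ≤ x := by
  intro i
  show 0 ≤ x i
  by_contra! hneg
  obtain ⟨k, -, hmin⟩ := Finset.exists_min_image Finset.univ x ⟨i, Finset.mem_univ i⟩
  have hxk : x k < 0 := (hmin i (Finset.mem_univ i)).trans_lt hneg
  have hk : ((t • 1 - Q) *ᵥ x) k = t * x k - ∑ j, Q k j * x j := by
    rw [sub_mulVec, smul_mulVec, one_mulVec]
    rfl
  have hsum : (∑ j, Q k j) * x k ≤ ∑ j, Q k j * x j := by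
    rw [Finset.sum_mul]
    exact Finset.sum_le_sum fun j _ =>
      mul_le_mul_of_nonneg_left (hmin j (Finset.mem_univ j)) (hQ k j)
  have hlt : t * x k < (∑ j, Q k j) * x k := mul_lt_mul_of_neg_right (hrow k) hxk
  have hk0 : 0 ≤ t * x k - ∑ j, Q k j * x j := hk ▸ hx k
  linarith

lemma isUnit_det_smul_one_sub_of_rowSum_lt (hQ : ∀ i j, 0 ≤ Q i j)
    (hrow : ∀ i, ∑ j, Q i j < t) : IsUnit (t • 1 - Q).det := by
  rw [← isUnit_iff_isUnit_det, ← mulVec_injective_iff_isUnit]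
  intro x y hxy
  have hsub : ∀ v w : ι → ℝ, (t • 1 - Q) *ᵥ v = (t • 1 - Q) *ᵥ w → 0 ≤ v - w := fun v w h =>
    nonneg_of_smul_one_sub_mulVec_nonneg hQ hrow (by rw [mulVec_sub, h, sub_self])
  exact le_antisymm (sub_nonneg.mp (hsub y x hxy.symm)) (sub_nonneg.mp (hsub x y hxy))

lemma inv_smul_one_sub_nonneg_of_rowSum_lt (hQ : ∀ i j, 0 ≤ Q i j)
    (hrow : ∀ i, ∑ j, Q i j < t) (i j : ι) : 0 ≤ (t • 1 - Q)⁻¹ i j := by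
  have hcol : (t • 1 - Q) *ᵥ ((t • 1 - Q)⁻¹ *ᵥ Pi.single j 1) = Pi.single j 1 := by
    rw [mulVec_mulVec, mul_nonsing_inv _ (isUnit_det_smul_one_sub_of_rowSum_lt hQ hrow),
      one_mulVec]
  have := nonneg_of_smul_one_sub_mulVec_nonneg hQ hrow (hcol ▸ Pi.single_nonneg.mpr zero_le_one) i
  simpa [mulVec_single_one] using this

end RowSum

section Resolvent

variable {Q : Matrix ι ι ℝ}

/-- If `B = (m • 1 - Q)⁻¹ ≥ 0`, then `s • 1 - Q = (m • 1 - Q) * (1 - (m - s) • B)` and the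
second factor is inverse-nonnegative as long as `(m - s) • B` has row sums `< 1`. -/
lemma eventually_nhdsLE_inv_smul_one_sub_nonneg {m : ℝ}
    (hm : IsUnit (m • 1 - Q).det) (hB : ∀ i j, 0 ≤ (m • 1 - Q)⁻¹ i j) :
    ∀ᶠ s in 𝓝[≤] m, ∀ i j, 0 ≤ (s • 1 - Q)⁻¹ i j := by
  set B := (m • 1 - Q)⁻¹
  set c := ∑ k, ∑ l, B k l
  have hc : 0 ≤ c := Finset.sum_nonneg fun k _ => Finset.sum_nonneg fun l _ => hB k l
  filter_upwards [Ioc_mem_nhdsLE (sub_lt_self m (by positivity : 0 < 1 / (c + 1)))]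
    with s ⟨hs, hsm⟩ i j
  set ε := m - s
  have hε : 0 ≤ ε := sub_nonneg.mpr hsm
  have hεc : ε * c < 1 := by
    have : ε * (c + 1) < 1 := by rwa [← lt_div_iff₀ (by positivity), sub_lt_comm]
    nlinarith
  have hεB : ∀ k l, 0 ≤ (ε • B) k l := fun k l => mul_nonneg hε (hB k l)
  have hrow : ∀ k, ∑ l, (ε • B) k l < 1 := fun k => by
    have : ∑ l, B k l ≤ c :=
      Finset.single_le_sum (f := fun k => ∑ l, B k l)
        (fun k _ => Finset.sum_nonneg fun l _ => hB k l) (Finset.mem_univ k)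
    simp only [smul_apply, smul_eq_mul, ← Finset.mul_sum]
    exact (mul_le_mul_of_nonneg_left this hε).trans_lt hεc
  have hfactor : s • 1 - Q = (m • 1 - Q) * (1 - ε • B) := by
    rw [Matrix.mul_sub, Matrix.mul_one, Matrix.mul_smul, mul_nonsing_inv _ hm, sub_smul]
    abel
  have hinv := inv_smul_one_sub_nonneg_of_rowSum_lt hεB hrow
  rw [one_smul] at hinv
  rw [hfactor, Matrix.mul_inv_rev]
  exact mul_entries_nonneg hinv hB i j

lemma continuousOn_inv_smul_one_sub {S : Set ℝ} (hS : ∀ t ∈ S, IsUnit (t • 1 - Q).det) :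
    ContinuousOn (fun t : ℝ => (t • 1 - Q)⁻¹) S := fun t ht =>
  ((continuousAt_matrix_inv _ (NormedRing.inverse_continuousAt (hS t ht).unit)).comp
    (f := fun t : ℝ => t • (1 : Matrix ι ι ℝ) - Q) (by fun_prop)).continuousWithinAt

lemma inv_one_sub_nonneg (hQ : ∀ i j, 0 ≤ Q i j)
    (hu : ∀ t : ℝ, 1 ≤ t → IsUnit (t • 1 - Q).det) (i j : ι) : 0 ≤ (1 - Q)⁻¹ i j := by
  set S := {t : ℝ | ∀ i j, 0 ≤ (t • 1 - Q)⁻¹ i j}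
  set b := 1 + ∑ k, ∑ l, Q k l
  have hrow : ∀ k, ∑ l, Q k l < b := fun k => by
    have : ∑ l, Q k l ≤ ∑ k, ∑ l, Q k l :=
      Finset.single_le_sum (f := fun k => ∑ l, Q k l)
        (fun k _ => Finset.sum_nonneg fun l _ => hQ k l) (Finset.mem_univ k)
    linarith
  have hb : 1 ≤ b := le_add_of_nonneg_right <|
    Finset.sum_nonneg fun k _ => Finset.sum_nonneg fun l _ => hQ k l
  have hclosed : IsClosed (S ∩ Set.Icc 1 b) := by
    have hT : IsClosed {B : Matrix ι ι ℝ | ∀ i j, 0 ≤ B i j} := by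
      simp only [Set.ofPred_forall]
      exact isClosed_iInter fun i => isClosed_iInter fun j =>
        isClosed_le continuous_const ((continuous_apply j).comp (continuous_apply i))
    rw [Set.inter_comm]
    exact (continuousOn_inv_smul_one_sub fun t ht => hu t ht.1).preimage_isClosed_of_isClosed
      isClosed_Icc hT
  have hstep : ∀ x ∈ S ∩ Set.Ioc 1 b, (S ∩ Set.Ico 1 x).Nonempty := by
    rintro x ⟨hxS, hx1, -⟩
    obtain ⟨s, hsS, hs1, hsx⟩ :=
      (((eventually_nhdsLE_inv_smul_one_sub_nonneg (hu x hx1.le) hxS).filter_mono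
        (nhdsWithin_mono x Set.Iio_subset_Iic_self)).and (Ioo_mem_nhdsLT hx1)).exists
    exact ⟨s, hsS, hs1.le, hsx⟩
  have h1 : (1 : ℝ) ∈ S := hclosed.mem_of_ge_of_forall_exists_lt
    (inv_smul_one_sub_nonneg_of_rowSum_lt hQ hrow) hb hstep
  simpa using h1 i j

lemma le_inv_one_sub_mulVec (hQ : ∀ i j, 0 ≤ Q i j) (hu : IsUnit (1 - Q).det)
    (hinv : ∀ i j, 0 ≤ (1 - Q)⁻¹ i j) {v : ι → ℝ} (hv : 0 ≤ v) : v ≤ (1 - Q)⁻¹ *ᵥ v := by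
  have hsplit : (1 - Q)⁻¹ = 1 + (1 - Q)⁻¹ * Q := eq_add_of_sub_eq <| by
    rw [← Matrix.mul_one (1 - Q)⁻¹, Matrix.mul_assoc, Matrix.one_mul, ← Matrix.mul_sub]
    exact nonsing_inv_mul _ hu
  rw [hsplit, add_mulVec, one_mulVec, ← mulVec_mulVec]
  exact le_add_of_nonneg_right <|
    mulVec_nonneg_of_entries_nonneg hinv (mulVec_nonneg_of_entries_nonneg hQ hv)

end Resolvent

lemma isUnit_det_smul_one_sub_of_spectralRadius_lt {A : Matrix ι ι ℝ}
    (hA : spectralRadius ℝ A < 1) {t : ℝ} (ht : 1 ≤ t) : IsUnit (t • 1 - A).det := by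
  rw [← isUnit_iff_isUnit_det, ← Algebra.algebraMap_eq_smul_one]
  by_contra hnot
  have hmem : t ∈ spectrum ℝ A := spectrum.mem_iff.mpr hnot
  have hle : ((‖t‖₊ : NNReal) : ENNReal) ≤ spectralRadius ℝ A :=
    le_iSup₂ (f := fun k (_ : k ∈ spectrum ℝ A) => ((‖k‖₊ : NNReal) : ENNReal)) t hmem
  have h1 : (1 : ENNReal) ≤ ((‖t‖₊ : NNReal) : ENNReal) := by
    rw [ENNReal.one_le_coe_iff, ← NNReal.coe_le_coe, coe_nnnorm, Real.norm_eq_abs]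
    exact ht.trans (le_abs_self t)
  exact (h1.trans hle).not_gt hA

end Matrix

section Skorokhod

variable {d : ℕ} {M : Matrix (Fin d) (Fin d) ℝ}

/-- Where `ζ i > 0`, complementarity gives `ξ i = 0`, so `(M⁻¹ η) i = (M⁻¹ ζ) i ≥ ζ i > 0`. -/
lemma IsLCPSol.eq_zero_iff {η ξ ζ : Fin d → ℝ} (h : IsLCPSol M η ξ ζ) (hM : IsUnit M.det)
    (hdom : ∀ v : Fin d → ℝ, 0 ≤ v → v ≤ M⁻¹ *ᵥ v) : ζ = 0 ↔ M⁻¹ *ᵥ η ≤ 0 := by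
  obtain ⟨hζ, hξ, hζ0, hcomp⟩ := h
  have hsolve : M⁻¹ *ᵥ ζ = M⁻¹ *ᵥ η + ξ := by
    rw [hζ, mulVec_add, mulVec_mulVec, nonsing_inv_mul _ hM, one_mulVec]
  constructor
  · intro h0 i
    have := congrFun hsolve i
    simp only [h0, mulVec_zero, Pi.zero_apply, Pi.add_apply] at this
    simp only [Pi.zero_apply]
    linarith [hξ i]
  · intro hη
    funext i
    show ζ i = 0
    have hprod : ξ i * ζ i = 0 := (Finset.sum_eq_zero_iff_of_nonneg
      (fun j _ => mul_nonneg (hξ j) (hζ0 j))).mp hcomp i (Finset.mem_univ i)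
    rcases mul_eq_zero.mp hprod with hξi | hζi
    · have hsol := congrFun hsolve i
      have hηi : (M⁻¹ *ᵥ η) i ≤ 0 := hη i
      simp only [Pi.add_apply, hξi, add_zero] at hsol
      linarith [hdom ζ hζ0 i, hζ0 i]
    · exact hζi

variable {a : Fin d → ℝ} {u y z : ℕ → Fin d → ℝ}

lemma IsSPSol.isLCPSol (h : IsSPSol M a u y z) {n : ℕ} (hn : 1 ≤ n) :
    IsLCPSol M (z (n - 1) + u n) (y n - y (n - 1)) (z n) := by
  obtain ⟨hstep, hz, hy, hcomp⟩ := h.2.2 n hn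
  exact ⟨hstep, hy, hz, by rwa [dotProduct_comm]⟩

lemma IsSPSol.eq_add_sum_add_mulVec (h : IsSPSol M a u y z) (n : ℕ) :
    z n = a + ∑ ℓ ∈ Finset.Icc 1 n, u ℓ + M *ᵥ y n := by
  induction n with
  | zero => simp [h.1, h.2.1]
  | succ n ih =>
    rw [(h.2.2 (n + 1) (Nat.le_add_left 1 n)).1, Nat.add_sub_cancel, ih,
      Finset.sum_Icc_succ_top (Nat.le_add_left 1 n), mulVec_sub]
    abel

lemma IsSPSol.eq_neg_inv_mulVec (h : IsSPSol M a u y z) (hM : IsUnit M.det) (n : ℕ) :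
    y n = -(M⁻¹ *ᵥ a) + ∑ ℓ ∈ Finset.Icc 1 n, -(M⁻¹ *ᵥ u ℓ) + M⁻¹ *ᵥ z n := by
  rw [h.eq_add_sum_add_mulVec n, mulVec_add, mulVec_add, mulVec_sum, mulVec_mulVec,
    nonsing_inv_mul _ hM, one_mulVec, Finset.sum_neg_distrib]
  abel

end Skorokhod

theorem stmt_8_general {d : ℕ} (P : Matrix (Fin d) (Fin d) ℝ)
    (hnonneg : ∀ i j, 0 ≤ P i j)
    (hspec : spectralRadius ℝ P < 1)
    (a : Fin d → ℝ) (u y z : ℕ → Fin d → ℝ)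
    (hSP : IsSPSol (1 - Pᵀ) a u y z) (n : ℕ) (hn : 1 ≤ n) :
    ((z n = 0) ↔
      ∀ i, ((1 - Pᵀ)⁻¹ *ᵥ z (n - 1)) i ≤ -(((1 - Pᵀ)⁻¹ *ᵥ u n) i)) ∧
    ((z n = 0) ↔
      ∀ i, y (n - 1) i ≤
        -(((1 - Pᵀ)⁻¹ *ᵥ a) i) + ∑ ℓ ∈ Finset.Icc 1 n, -(((1 - Pᵀ)⁻¹ *ᵥ u ℓ) i)) ∧
    (z n = 0 →
      y n = -((1 - Pᵀ)⁻¹ *ᵥ a) + ∑ ℓ ∈ Finset.Icc 1 n, -((1 - Pᵀ)⁻¹ *ᵥ u ℓ)) := by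
  have hQ : ∀ i j, 0 ≤ Pᵀ i j := fun i j => hnonneg j i
  have hunit : ∀ t : ℝ, 1 ≤ t → IsUnit (t • 1 - Pᵀ).det := fun t ht => by
    rw [← det_transpose, transpose_sub, transpose_smul, transpose_one, transpose_transpose]
    exact isUnit_det_smul_one_sub_of_spectralRadius_lt hspec ht
  have hR : IsUnit (1 - Pᵀ).det := by simpa using hunit 1 le_rfl
  have hdom : ∀ v : Fin d → ℝ, 0 ≤ v → v ≤ (1 - Pᵀ)⁻¹ *ᵥ v := fun _ =>
    le_inv_one_sub_mulVec hQ hR (inv_one_sub_nonneg hQ hunit)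
  have hzero : z n = 0 ↔ ∀ i, ((1 - Pᵀ)⁻¹ *ᵥ z (n - 1)) i ≤ -(((1 - Pᵀ)⁻¹ *ᵥ u n) i) := by
    rw [(hSP.isLCPSol hn).eq_zero_iff hR hdom, mulVec_add, Pi.le_def]
    simp only [Pi.add_apply, Pi.zero_apply, le_neg_iff_add_nonpos_right]
  obtain ⟨m, rfl⟩ := Nat.exists_eq_add_of_le' hn
  refine ⟨hzero, hzero.trans (forall_congr' fun i => ?_), fun h => ?_⟩
  · rw [Nat.add_sub_cancel, hSP.eq_neg_inv_mulVec hR m, Finset.sum_Icc_succ_top hn]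
    simp only [Pi.add_apply, Finset.sum_apply, Pi.neg_apply]
    constructor <;> intro <;> linarith
  · simpa [h] using hSP.eq_neg_inv_mulVec hR (m + 1)

theorem stmt_8 {d : ℕ} (P : Matrix (Fin d) (Fin d) ℝ)
    (hdiag : ∀ i, P i i = 0) (hnonneg : ∀ i j, 0 ≤ P i j)
    (hspec : spectralRadius ℝ P < 1)
    (a : Fin d → ℝ) (ha : ∀ i, 0 ≤ a i) (u y z : ℕ → Fin d → ℝ)
    (hSP : IsSPSol (1 - Pᵀ) a u y z) (n : ℕ) (hn : 1 ≤ n) :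
    ((z n = 0) ↔
      ∀ i, ((1 - Pᵀ)⁻¹ *ᵥ z (n - 1)) i ≤ -(((1 - Pᵀ)⁻¹ *ᵥ u n) i)) ∧
    ((z n = 0) ↔
      ∀ i, y (n - 1) i ≤
        -(((1 - Pᵀ)⁻¹ *ᵥ a) i) + ∑ ℓ ∈ Finset.Icc 1 n, -(((1 - Pᵀ)⁻¹ *ᵥ u ℓ) i)) ∧
    (z n = 0 →
      y n = -((1 - Pᵀ)⁻¹ *ᵥ a) + ∑ ℓ ∈ Finset.Icc 1 n, -((1 - Pᵀ)⁻¹ *ᵥ u ℓ)) :=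
  stmt_8_general P hnonneg hspec a u y z hSP n hn
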